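/- Let g be a Lie algebra over a field K of characteristic zero and κ an invariant symmetric bilinear form on g. Then the vector space (g ⊗ K[z,z^{-1}]) ⊕ K, with bracket determined on generators by [(x⊗f, s), (y⊗g, t)] = ([x,y] ⊗ f·g, κ(x,y)·Res(f·g')), is a Lie algebra: the bracket is alternating and satisfies the Jacobi identity. -/

import Mathlib

open TensorProduct

/-- The residue of a Laurent polynomial: the coefficient of `z⁻¹`. -/
noncomputable def lpRes {K : Type*} [Field K] (f : LaurentPolynomial K) : K :=
  (AddMonoidAlgebra.coeff f : ℤ →₀ K) (-1)

/-- The formal derivative of a Laurent polynomial: `∑ aₙ zⁿ ↦ ∑ n aₙ zⁿ⁻¹`. -/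
noncomputable def lpDeriv {K : Type*} [Field K] (f : LaurentPolynomial K) :
    LaurentPolynomial K :=
  AddMonoidAlgebra.ofCoeff <|
  (AddMonoidAlgebra.coeff f : ℤ →₀ K).sum fun n a => (Finsupp.single (n - 1) (n • a) : ℤ →₀ K)

/-- The formal derivative of Laurent polynomials, as a `K`-linear map. -/
noncomputable def lpDerivL (K : Type*) [Field K] :
    LaurentPolynomial K →ₗ[K] LaurentPolynomial K :=
  (AddMonoidAlgebra.coeffLinearEquiv K).symm.toLinearMap ∘ₗ
  (Finsupp.lsum K fun n : ℤ => (n : K) • Finsupp.lsingle (n - 1) :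
    (ℤ →₀ K) →ₗ[K] (ℤ →₀ K)) ∘ₗ (AddMonoidAlgebra.coeffLinearEquiv K).toLinearMap

/-- The residue of Laurent polynomials, as a `K`-linear map. -/
noncomputable def lpResL (K : Type*) [Field K] : LaurentPolynomial K →ₗ[K] K :=
  (Finsupp.lapply (-1) : (ℤ →₀ K) →ₗ[K] K) ∘ₗ (AddMonoidAlgebra.coeffLinearEquiv K).toLinearMap

/-- The bilinear form `(f, g) ↦ Res(f · g')` on Laurent polynomials. -/
noncomputable def resPairing (K : Type*) [Field K] :
    LinearMap.BilinForm K (LaurentPolynomial K) :=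
  ((LinearMap.mul K (LaurentPolynomial K)).compr₂ (lpResL K)).compl₂ (lpDerivL K)

/-- The bracket of the affine Kac–Moody algebra `(𝔤 ⊗ K[z,z⁻¹]) ⊕ K`:
`[(u, s), (v, t)] = ([u, v], c(u, v))` where `c` is the bilinear extension of
`c(x ⊗ f, y ⊗ g) = κ(x,y)·Res(f·g')` and the loop algebra bracket is the
bilinear extension of `[x ⊗ f, y ⊗ g] = [x,y] ⊗ fg`. -/
noncomputable def affineBracket {K : Type*} [Field K] {𝔤 : Type*} [LieRing 𝔤]
    [LieAlgebra K 𝔤] (κ : LinearMap.BilinForm K 𝔤)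
    (p q : (LaurentPolynomial K ⊗[K] 𝔤) × K) :
    (LaurentPolynomial K ⊗[K] 𝔤) × K :=
  (⁅p.1, q.1⁆, LinearMap.BilinForm.tmul (resPairing K) κ p.1 q.1)

/-! The bracket is the current-algebra bracket of `K[z,z⁻¹] ⊗ 𝔤` plus the scalar cochain
`c = Res(f g') ⊗ κ`, so it is a Lie bracket as soon as `c` is an alternating 2-cocycle.
Because `d/dz` is a derivation whose image is killed by `Res`, the pairing `Res(f g')` is skew and
its cyclic sum over products is `Res((fgh)') = 0`; symmetry and invariance of `κ` make
`κ([x,y],z)` cyclically invariant, which turns this into the cocycle identity on pure tensors.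
Skewness gives alternation only when 2 is invertible, so alternation is checked on monomials:
`Res(zⁿ · n zⁿ⁻¹)` can only be nonzero for `n = 0`, where the factor `n` vanishes. -/

section LieRing

variable {L : Type*} [LieRing L]

theorem lie_lie_add_lie_lie_add_lie_lie (x y z : L) :
    ⁅⁅x, y⁆, z⁆ + ⁅⁅y, z⁆, x⁆ + ⁅⁅z, x⁆, y⁆ = 0 := by
  rw [← lie_skew ⁅x, y⁆, ← lie_skew ⁅y, z⁆, ← lie_skew ⁅z, x⁆, ← neg_add, ← neg_add,
    add_rotate, lie_jacobi, neg_zero]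

end LieRing

namespace LinearMap

namespace BilinForm

section Alternating

variable {R M : Type*} [CommRing R] [AddCommGroup M] [Module R M]

theorem apply_add_self_eq_zero {B : LinearMap.BilinForm R M} (hB : ∀ x y, B x y = -B y x)
    {x y : M} (hx : B x x = 0) (hy : B y y = 0) : B (x + y) (x + y) = 0 := by
  simp only [map_add, LinearMap.add_apply, hx, hy, hB x y]
  abel

end Alternating

section TensorProduct

variable {R A M₁ M₂ : Type*} [CommRing R] [CommRing A] [Algebra R A]
  [AddCommGroup M₁] [AddCommGroup M₂] [Module A M₁] [Module R M₁] [SMulCommClass R A M₁]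
  [IsScalarTower R A M₁] [Module R M₂]

attribute [local ext] TensorProduct.ext in
theorem flip_tmul_eq_neg {B₁ : LinearMap.BilinForm A M₁} {B₂ : LinearMap.BilinForm R M₂}
    (hB₁ : B₁.IsAlt) (hB₂ : B₂.IsSymm) : (B₁.tmul B₂).flip = -B₁.tmul B₂ := by
  ext x₁ x₂ y₁ y₂
  simp [hB₂.eq x₂ y₂, ← hB₁.neg_eq x₁ y₁]

theorem IsAlt.tmul {B₁ : LinearMap.BilinForm A M₁} {B₂ : LinearMap.BilinForm R M₂}
    (hB₁ : B₁.IsAlt) (hB₂ : B₂.IsSymm) : (B₁.tmul B₂).IsAlt := by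
  have hskew (u v : M₁ ⊗[R] M₂) : B₁.tmul B₂ u v = -B₁.tmul B₂ v u := by
    rw [← neg_apply, ← flip_tmul_eq_neg hB₁ hB₂, LinearMap.flip_apply]
  intro u
  induction u using TensorProduct.induction_on with
  | zero => simp
  | tmul x y => simp [hB₁.self_eq_zero x]
  | add u v hu hv => exact apply_add_self_eq_zero hskew hu hv

end TensorProduct

section Cocycle

open LieAlgebra.ExtendScalars

variable {R A L : Type*} [CommRing R] [CommRing A] [Algebra R A] [LieRing L] [LieAlgebra R L]

theorem tmul_lie_cyclic_eq_zero {B : LinearMap.BilinForm R A} {κ : LinearMap.BilinForm R L}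
    (hB : ∀ f g h : A, B (f * g) h + B (g * h) f + B (h * f) g = 0) (hκ : κ.IsSymm)
    (hκinv : ∀ x y z : L, κ ⁅x, y⁆ z = κ x ⁅y, z⁆) (u v w : A ⊗[R] L) :
    B.tmul κ ⁅u, v⁆ w + B.tmul κ ⁅v, w⁆ u + B.tmul κ ⁅w, u⁆ v = 0 := by
  induction u using TensorProduct.induction_on with
  | zero => simp
  | add u₁ u₂ h₁ h₂ =>
    simp only [add_lie, lie_add, map_add, LinearMap.add_apply]
    linear_combination h₁ + h₂
  | tmul f x =>
    induction v using TensorProduct.induction_on with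
    | zero => simp
    | add v₁ v₂ h₁ h₂ =>
      simp only [add_lie, lie_add, map_add, LinearMap.add_apply]
      linear_combination h₁ + h₂
    | tmul g y =>
      induction w using TensorProduct.induction_on with
      | zero => simp
      | add w₁ w₂ h₁ h₂ =>
        simp only [add_lie, lie_add, map_add, LinearMap.add_apply]
        linear_combination h₁ + h₂
      | tmul h z =>
        have hyzx : κ ⁅y, z⁆ x = κ ⁅x, y⁆ z := by rw [hκ.eq, hκinv]
        have hzxy : κ ⁅z, x⁆ y = κ ⁅x, y⁆ z := by rw [hκinv, hκ.eq]
        simp only [bracket_tmul, tensorDistrib_tmul, smul_eq_mul, hyzx, hzxy]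
        linear_combination κ ⁅x, y⁆ z * hB f g h

end Cocycle

end BilinForm

end LinearMap

namespace Derivation

variable {R A : Type*} [CommRing R] [CommRing A] [Algebra R A] {D : Derivation R A A}
  {ρ : A →ₗ[R] R}

theorem map_mul_add_map_mul_swap_eq_zero (hρ : ∀ a, ρ (D a) = 0) (a b : A) :
    ρ (a * D b) + ρ (b * D a) = 0 := by
  rw [← map_add, ← smul_eq_mul, ← smul_eq_mul, ← leibniz, hρ]

theorem map_mul_cyclic_eq_zero (hρ : ∀ a, ρ (D a) = 0) (a b c : A) :
    ρ (a * b * D c) + ρ (b * c * D a) + ρ (c * a * D b) = 0 := by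
  have h := hρ (a * b * c)
  rw [leibniz, leibniz, smul_add] at h
  simp only [smul_eq_mul, map_add, ← mul_assoc, mul_comm c b] at h
  linear_combination h

end Derivation

section LaurentPolynomial

variable {K : Type*} [Field K]

theorem lpDerivL_single (n : ℤ) (a : K) :
    lpDerivL K (AddMonoidAlgebra.single n a) =
      (n : K) • (AddMonoidAlgebra.single (n - 1) a : LaurentPolynomial K) := by
  show (AddMonoidAlgebra.coeffLinearEquiv K).symm (Finsupp.lsum K _ (Finsupp.single n a)) = _
  rw [Finsupp.lsum_single]
  rfl

theorem lpDeriv_eq_lpDerivL (f : LaurentPolynomial K) : lpDeriv f = lpDerivL K f := by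
  induction f using AddMonoidAlgebra.induction_linear with
  | zero => simp [lpDeriv]
  | add f g hf hg =>
    rw [map_add, ← hf, ← hg, lpDeriv, lpDeriv, lpDeriv, AddMonoidAlgebra.coeff_add,
      Finsupp.sum_add_index (by simp) (by intros; rw [smul_add, Finsupp.single_add]),
      AddMonoidAlgebra.ofCoeff_add]
  | single n a =>
    rw [lpDeriv, AddMonoidAlgebra.coeff_single, Finsupp.sum_single_index (by simp),
      lpDerivL_single, AddMonoidAlgebra.ofCoeff_single, AddMonoidAlgebra.smul_single,
      zsmul_eq_mul, smul_eq_mul]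

theorem lpDerivL_mul (f g : LaurentPolynomial K) :
    lpDerivL K (f * g) = f * lpDerivL K g + g * lpDerivL K f := by
  induction f using AddMonoidAlgebra.induction_linear with
  | zero => simp
  | add f₁ f₂ h₁ h₂ => simp only [add_mul, map_add, h₁, h₂, mul_add]; ring
  | single n a =>
    induction g using AddMonoidAlgebra.induction_linear with
    | zero => simp
    | add g₁ g₂ h₁ h₂ => simp only [mul_add, map_add, h₁, h₂]; ring
    | single m b =>
      simp only [AddMonoidAlgebra.single_mul_single, lpDerivL_single,
        AddMonoidAlgebra.smul_single, smul_eq_mul]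
      rw [show n + (m - 1) = n + m - 1 by ring, show m + (n - 1) = n + m - 1 by ring,
        ← AddMonoidAlgebra.single_add]
      congr 1
      push_cast
      ring

variable (K) in
noncomputable def lpDerivation : Derivation K (LaurentPolynomial K) (LaurentPolynomial K) :=
  Derivation.mk' (lpDerivL K) lpDerivL_mul

theorem lpResL_lpDerivation (f : LaurentPolynomial K) : lpResL K (lpDerivation K f) = 0 := by
  induction f using AddMonoidAlgebra.induction_linear with
  | zero => simp
  | add f g hf hg => simp [hf, hg]
  | single n a =>
    show lpResL K (lpDerivL K _) = 0
    rw [lpDerivL_single, map_smul]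
    show (n : K) • (Finsupp.single (n - 1) a : ℤ →₀ K) (-1) = 0
    rcases eq_or_ne n 0 with rfl | hn
    · simp
    · rw [Finsupp.single_eq_of_ne (by omega), smul_zero]

theorem resPairing_apply (f g : LaurentPolynomial K) :
    resPairing K f g = lpResL K (f * lpDerivation K g) :=
  rfl

theorem resPairing_isAlt : (resPairing K).IsAlt := by
  have hskew (f g : LaurentPolynomial K) : resPairing K f g = -resPairing K g f := by
    rw [resPairing_apply, resPairing_apply, eq_neg_iff_add_eq_zero]
    exact Derivation.map_mul_add_map_mul_swap_eq_zero lpResL_lpDerivation f g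
  intro f
  induction f using AddMonoidAlgebra.induction_linear with
  | zero => simp
  | add f g hf hg => exact LinearMap.BilinForm.apply_add_self_eq_zero hskew hf hg
  | single n a =>
    show lpResL K (_ * lpDerivL K _) = 0
    rw [lpDerivL_single, mul_smul_comm, AddMonoidAlgebra.single_mul_single, map_smul]
    show (n : K) • (Finsupp.single (n + (n - 1)) (a * a) : ℤ →₀ K) (-1) = 0
    rcases eq_or_ne n 0 with rfl | hn
    · simp
    · rw [Finsupp.single_eq_of_ne (by omega), smul_zero]

theorem resPairing_mul_cyclic_eq_zero (f g h : LaurentPolynomial K) :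
    resPairing K (f * g) h + resPairing K (g * h) f + resPairing K (h * f) g = 0 :=
  Derivation.map_mul_cyclic_eq_zero lpResL_lpDerivation f g h

end LaurentPolynomial

theorem affine_kacMoody_is_lieAlgebra_general {K : Type*} [Field K]
    {𝔤 : Type*} [LieRing 𝔤] [LieAlgebra K 𝔤] (κ : LinearMap.BilinForm K 𝔤)
    (hsymm : ∀ x y : 𝔤, κ x y = κ y x)
    (hinv : ∀ x y w : 𝔤, κ ⁅x, y⁆ w = κ x ⁅y, w⁆) :
    (∀ (f g : LaurentPolynomial K) (x y : 𝔤) (s t : K),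
        affineBracket κ (f ⊗ₜ[K] x, s) (g ⊗ₜ[K] y, t)
          = ((f * g) ⊗ₜ[K] ⁅x, y⁆, κ x y * lpRes (f * lpDeriv g)))
      ∧ (∀ p : (LaurentPolynomial K ⊗[K] 𝔤) × K, affineBracket κ p p = 0)
      ∧ (∀ p q r : (LaurentPolynomial K ⊗[K] 𝔤) × K,
          affineBracket κ (affineBracket κ p q) r
            + affineBracket κ (affineBracket κ q r) p
            + affineBracket κ (affineBracket κ r p) q = 0) := by
  have hκ : κ.IsSymm := ⟨hsymm⟩
  refine ⟨fun f g x y _ _ => ?_, fun p => ?_, fun p q r => ?_⟩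
  · refine Prod.ext rfl ?_
    simp only [affineBracket, LinearMap.BilinForm.tensorDistrib_tmul, smul_eq_mul,
      resPairing_apply, lpDeriv_eq_lpDerivL]
    rfl
  · exact Prod.ext (lie_self p.1) (resPairing_isAlt.tmul hκ p.1)
  · exact Prod.ext (lie_lie_add_lie_lie_add_lie_lie p.1 q.1 r.1)
      (LinearMap.BilinForm.tmul_lie_cyclic_eq_zero resPairing_mul_cyclic_eq_zero hκ hinv
        p.1 q.1 r.1)

/-- The affine Kac–Moody central extension is a Lie algebra.  Given a Lie algebra `𝔤`
over a field `K` of characteristic zero and an invariant symmetric bilinear form `κ`,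
the bracket on `(𝔤 ⊗ K[z,z⁻¹]) ⊕ K` determined on generators by
`[(x⊗f, s), (y⊗g, t)] = ([x,y] ⊗ f·g, κ(x,y)·Res(f·g'))`
is alternating and satisfies the Jacobi identity. -/
theorem affine_kacMoody_is_lieAlgebra {K : Type*} [Field K] [CharZero K]
    {𝔤 : Type*} [LieRing 𝔤] [LieAlgebra K 𝔤] (κ : LinearMap.BilinForm K 𝔤)
    (hsymm : ∀ x y : 𝔤, κ x y = κ y x)
    (hinv : ∀ x y w : 𝔤, κ ⁅x, y⁆ w = κ x ⁅y, w⁆) :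
    (∀ (f g : LaurentPolynomial K) (x y : 𝔤) (s t : K),
        affineBracket κ (f ⊗ₜ[K] x, s) (g ⊗ₜ[K] y, t)
          = ((f * g) ⊗ₜ[K] ⁅x, y⁆, κ x y * lpRes (f * lpDeriv g)))
      ∧ (∀ p : (LaurentPolynomial K ⊗[K] 𝔤) × K, affineBracket κ p p = 0)
      ∧ (∀ p q r : (LaurentPolynomial K ⊗[K] 𝔤) × K,
          affineBracket κ (affineBracket κ p q) r
            + affineBracket κ (affineBracket κ q r) p
            + affineBracket κ (affineBracket κ r p) q = 0) :=
  affine_kacMoody_is_lieAlgebra_general κ hsymm hinv
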